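/- Let X be a locally compact metric space, B ⊆ X compact, and π_n a skew product flow on ℝ × X. Let G ⊆ ℝ × B be closed and positively π_n-invariant (A⁺_{π_n}(G) = G), and suppose every slice G(t) := G ∩ ({t} × X) is nonempty. Then for every t ∈ ℝ the set A(t) := ⋂_{r ≥ 0} (G(t−r)π_n r) is nonempty and compact, the set A := ⋃_{t ∈ ℝ} A(t) is π_n-invariant, and A = A_{π_n}(G) is the maximal π_n-invariant subset of G; in particular A_{π_n}(G) ∩ ({t} × X) is nonempty and compact for every t ∈ ℝ. -/

import Mathlib

open Set Metric Filter Topology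

/-- A (global) flow on a metric space: jointly continuous, identity at time `0`,
and `zρ(s+t) = (zρt)ρs` for all `s t : ℝ`. -/
def IsFlow {Z : Type*} [MetricSpace Z] (ρ : ℝ → Z → Z) : Prop :=
  Continuous (fun p : ℝ × Z => ρ p.1 p.2) ∧ (∀ z, ρ 0 z = z) ∧
    ∀ (s t : ℝ) (z : Z), ρ (s + t) z = ρ s (ρ t z)

/-- `G^T_ρ(Y) = {z : zρt ∈ cl Y for all t ∈ [−T,T]}`. -/
def Gset {Z : Type*} [MetricSpace Z] (ρ : ℝ → Z → Z) (T : ℝ) (Y : Set Z) : Set Z :=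
  {z | ∀ t ∈ Set.Icc (-T) T, ρ t z ∈ closure Y}

/-- `Γ^T_ρ(Y) = {z ∈ G^T_ρ(Y) : zρt ∈ ∂Y for some t ∈ [0,T]}`. -/
def GammaSet {Z : Type*} [MetricSpace Z] (ρ : ℝ → Z → Z) (T : ℝ) (Y : Set Z) : Set Z :=
  {z ∈ Gset ρ T Y | ∃ t ∈ Set.Icc (0:ℝ) T, ρ t z ∈ frontier Y}

/-- `A⁺_ρ(Y) = {z ∈ Y : zρt ∈ Y for all t ≥ 0}`. -/
def Aplus {Z : Type*} [MetricSpace Z] (ρ : ℝ → Z → Z) (Y : Set Z) : Set Z :=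
  {z ∈ Y | ∀ t : ℝ, 0 ≤ t → ρ t z ∈ Y}

/-- `A⁻_ρ(Y) = {z ∈ Y : zρ(−t) ∈ Y for all t ≥ 0}`. -/
def Aminus {Z : Type*} [MetricSpace Z] (ρ : ℝ → Z → Z) (Y : Set Z) : Set Z :=
  {z ∈ Y | ∀ t : ℝ, 0 ≤ t → ρ (-t) z ∈ Y}

/-- `A_ρ(Y) = A⁺_ρ(Y) ∩ A⁻_ρ(Y)`. -/
def Ainv {Z : Type*} [MetricSpace Z] (ρ : ℝ → Z → Z) (Y : Set Z) : Set Z :=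
  Aplus ρ Y ∩ Aminus ρ Y

/-- The family `𝓕` of sets `N` with nonempty interior such that `G^T(N) ⊆ int N`
for some `T > 0`. -/
def calF {Z : Type*} [MetricSpace Z] (ρ : ℝ → Z → Z) : Set (Set Z) :=
  {N | (interior N).Nonempty ∧ ∃ T > 0, Gset ρ T N ⊆ interior N}

/-- The product flow of `π₀` on `ℝ × X`: `(s,x)πt = (s+t, xπ₀t)`. -/
def prodFlow {X : Type*} [MetricSpace X] (π₀ : ℝ → X → X) : ℝ → ℝ × X → ℝ × X :=
  fun t p => (p.1 + t, π₀ t p.2)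

/-- A flow on `ℝ × X` is a skew product flow if `P₁((s,x)πt) = s + t`. -/
def IsSkewFlow {X : Type*} [MetricSpace X] (σ : ℝ → ℝ × X → ℝ × X) : Prop :=
  ∀ (t s : ℝ) (x : X), (σ t (s, x)).1 = s + t

/-- Semi-singular convergence of a sequence of flows on `ℝ × X` to a flow on `X`:
for every sequence `(s_n)` in `ℝ` and all sequences `x_n → x₀`, `t_n → t₀ ∈ [0,∞)`,
`P₂((s_n,x_n) π_n t_n) → x₀ π₀ t₀`. -/
def SemiSingConv {X : Type*} [MetricSpace X]
    (πn : ℕ → ℝ → ℝ × X → ℝ × X) (π₀ : ℝ → X → X) : Prop :=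
  ∀ (s : ℕ → ℝ) (x : ℕ → X) (x₀ : X) (t : ℕ → ℝ) (t₀ : ℝ),
    Filter.Tendsto x Filter.atTop (nhds x₀) → (∀ n, 0 ≤ t n) →
    Filter.Tendsto t Filter.atTop (nhds t₀) →
    Filter.Tendsto (fun n => (πn n (t n) (s n, x n)).2) Filter.atTop (nhds (π₀ t₀ x₀))

/-- `B` is a stable isolating block for the flow `ρ`: a closed isolating neighborhood
which is positively invariant and such that each boundary point immediately leaves `B`
in backward time and immediately enters `int B` in forward time. -/
def IsStableIsolatingBlock {Z : Type*} [MetricSpace Z] (ρ : ℝ → Z → Z) (B : Set Z) : Prop :=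
  IsClosed B ∧ Ainv ρ B ⊆ interior B ∧ Aplus ρ B = B ∧
    ∀ z ∈ frontier B, ∃ ε > 0, ∀ t ∈ Set.Ioo (0:ℝ) ε, ρ (-t) z ∉ B ∧ ρ t z ∈ interior B

/-
Since the flow is skew, a point `z` with `z.1 = t` lies in `A(t)` exactly when its whole backward
orbit stays in `G`; positive invariance of `G` then puts its whole orbit in `G`, which identifies
`⋃ₜ A(t)` with `A_ρ(G)` and `A(t)` with the `t`-slice of `A_ρ(G)`. The sets `G(t - r)ρr` are compact
(images of closed subsets of `{t - r} × B`), nonempty, and decrease in `r` by positive invariance,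
so `A(t)` is nonempty and compact by Cantor's intersection theorem.
-/

section Flow

variable {Z : Type*} [MetricSpace Z] {ρ : ℝ → Z → Z}

theorem Ainv_mono {Y Y' : Set Z} (h : Y ⊆ Y') : Ainv ρ Y ⊆ Ainv ρ Y' :=
  fun _ ⟨⟨hz, hpos⟩, _, hneg⟩ =>
    ⟨⟨h hz, fun t ht => h (hpos t ht)⟩, h hz, fun t ht => h (hneg t ht)⟩

theorem Aplus_eq_self_iff {Y : Set Z} : Aplus ρ Y = Y ↔ ∀ z ∈ Y, ∀ t, 0 ≤ t → ρ t z ∈ Y :=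
  ⟨fun h z hz => (h.symm ▸ hz : z ∈ Aplus ρ Y).2,
    fun h => Subset.antisymm (fun _ hz => hz.1) fun z hz => ⟨hz, h z hz⟩⟩

namespace IsFlow

variable (hρ : IsFlow ρ)
include hρ

theorem continuous_apply (t : ℝ) : Continuous (ρ t) :=
  hρ.1.comp (continuous_const.prodMk continuous_id)

theorem apply_zero (z : Z) : ρ 0 z = z :=
  hρ.2.1 z

theorem apply_apply (s t : ℝ) (z : Z) : ρ s (ρ t z) = ρ (s + t) z :=
  (hρ.2.2 s t z).symm

theorem apply_neg_apply (t : ℝ) (z : Z) : ρ (-t) (ρ t z) = z := by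
  rw [hρ.apply_apply, neg_add_cancel, hρ.apply_zero]

theorem apply_apply_neg (t : ℝ) (z : Z) : ρ t (ρ (-t) z) = z := by
  simpa using hρ.apply_neg_apply (-t) z

theorem mem_Ainv_iff {Y : Set Z} {z : Z} : z ∈ Ainv ρ Y ↔ ∀ t, ρ t z ∈ Y := by
  refine ⟨fun ⟨⟨_, hpos⟩, _, hneg⟩ t => ?_, fun h => ?_⟩
  · rcases le_total 0 t with ht | ht
    · exact hpos t ht
    · simpa using hneg (-t) (neg_nonneg.2 ht)
  · have hz : z ∈ Y := by simpa [hρ.apply_zero] using h 0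
    exact ⟨⟨hz, fun t _ => h t⟩, hz, fun t _ => h (-t)⟩

theorem Ainv_Ainv (Y : Set Z) : Ainv ρ (Ainv ρ Y) = Ainv ρ Y := by
  ext z
  simp only [hρ.mem_Ainv_iff, hρ.apply_apply]
  exact ⟨fun h t => by simpa using h t 0, fun h t s => h (s + t)⟩

end IsFlow

end Flow

section SkewProduct

variable {X : Type*}

/-- The paper's `G(t)`. -/
def slice (G : Set (ℝ × X)) (t : ℝ) : Set (ℝ × X) :=
  G ∩ ({t} : Set ℝ) ×ˢ (Set.univ : Set X)

/-- The paper's `A(t)`. -/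
def pullbackSlice (ρ : ℝ → ℝ × X → ℝ × X) (G : Set (ℝ × X)) (t : ℝ) : Set (ℝ × X) :=
  ⋂ r ∈ Set.Ici (0:ℝ), ρ r '' slice G (t - r)

theorem mem_slice {G : Set (ℝ × X)} {t : ℝ} {z : ℝ × X} : z ∈ slice G t ↔ z ∈ G ∧ z.1 = t := by
  simp [slice]

theorem iUnion_slice (G : Set (ℝ × X)) : ⋃ t, slice G t = G := by
  ext z
  simp [mem_slice]

theorem isCompact_slice [TopologicalSpace X] {B : Set X} (hB : IsCompact B) {G : Set (ℝ × X)}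
    (hGsub : G ⊆ (Set.univ : Set ℝ) ×ˢ B) (hGclosed : IsClosed G) (t : ℝ) :
    IsCompact (slice G t) :=
  (isCompact_singleton.prod hB).of_isClosed_subset
    (hGclosed.inter (isClosed_singleton.prod isClosed_univ))
    fun _ ⟨hzG, hz1, _⟩ => ⟨hz1, (hGsub hzG).2⟩

section Compactness

variable [MetricSpace X] {ρ : ℝ → ℝ × X → ℝ × X} (hρ : IsFlow ρ) {B : Set X} (hB : IsCompact B)
  {G : Set (ℝ × X)} (hGsub : G ⊆ (Set.univ : Set ℝ) ×ˢ B) (hGclosed : IsClosed G)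
include hρ hB hGsub hGclosed

theorem isCompact_image_slice (r s : ℝ) : IsCompact (ρ r '' slice G s) :=
  (isCompact_slice hB hGsub hGclosed s).image (hρ.continuous_apply r)

theorem isCompact_pullbackSlice (t : ℝ) : IsCompact (pullbackSlice ρ G t) :=
  have hK r := isCompact_image_slice hρ hB hGsub hGclosed r (t - r)
  (hK 0).of_isClosed_subset (isClosed_biInter fun r _ => (hK r).isClosed)
    (biInter_subset_of_mem (mem_Ici.2 le_rfl))

end Compactness

theorem IsSkewFlow.fst_apply [MetricSpace X] {ρ : ℝ → ℝ × X → ℝ × X} (hskew : IsSkewFlow ρ)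
    (t : ℝ) (z : ℝ × X) : (ρ t z).1 = z.1 + t :=
  hskew t z.1 z.2

variable [MetricSpace X] {ρ : ℝ → ℝ × X → ℝ × X} (hρ : IsFlow ρ) (hskew : IsSkewFlow ρ)
  {G : Set (ℝ × X)}
include hρ hskew

theorem mem_image_slice_iff {s r : ℝ} {z : ℝ × X} :
    z ∈ ρ r '' slice G s ↔ z.1 = s + r ∧ ρ (-r) z ∈ G := by
  constructor
  · rintro ⟨w, hw, rfl⟩
    rw [mem_slice] at hw
    rw [hskew.fst_apply, hw.2, hρ.apply_neg_apply]
    exact ⟨rfl, hw.1⟩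
  · rintro ⟨hz1, hz⟩
    refine ⟨ρ (-r) z, mem_slice.2 ⟨hz, ?_⟩, hρ.apply_apply_neg r z⟩
    rw [hskew.fst_apply, hz1]
    ring

theorem mem_pullbackSlice_iff {t : ℝ} {z : ℝ × X} :
    z ∈ pullbackSlice ρ G t ↔ z.1 = t ∧ ∀ r, 0 ≤ r → ρ (-r) z ∈ G := by
  simp only [pullbackSlice, mem_iInter, mem_Ici, mem_image_slice_iff hρ hskew, sub_add_cancel]
  exact ⟨fun h => ⟨(h 0 le_rfl).1, fun r hr => (h r hr).2⟩, fun h r hr => ⟨h.1, h.2 r hr⟩⟩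

variable (hGpos : Aplus ρ G = G)
include hGpos

theorem slice_Ainv_eq_pullbackSlice (t : ℝ) : slice (Ainv ρ G) t = pullbackSlice ρ G t := by
  ext z
  rw [mem_slice, mem_pullbackSlice_iff hρ hskew, hρ.mem_Ainv_iff, and_comm]
  refine and_congr_right fun _ => ⟨fun h r _ => h (-r), fun h s => ?_⟩
  have hz : z ∈ G := by simpa [hρ.apply_zero] using h 0 le_rfl
  rcases le_total 0 s with hs | hs
  · exact Aplus_eq_self_iff.1 hGpos z hz s hs
  · simpa using h (-s) (neg_nonneg.2 hs)

theorem iUnion_pullbackSlice : ⋃ t, pullbackSlice ρ G t = Ainv ρ G := by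
  simp_rw [← slice_Ainv_eq_pullbackSlice hρ hskew hGpos, iUnion_slice]

theorem image_slice_subset_of_le (t : ℝ) {r r' : ℝ} (hr : r ≤ r') :
    ρ r' '' slice G (t - r') ⊆ ρ r '' slice G (t - r) := by
  intro z hz
  rw [mem_image_slice_iff hρ hskew, sub_add_cancel] at hz ⊢
  refine ⟨hz.1, ?_⟩
  have h := Aplus_eq_self_iff.1 hGpos _ hz.2 (r' - r) (sub_nonneg.2 hr)
  rwa [hρ.apply_apply, show r' - r + -r' = -r by ring] at h

theorem nonempty_pullbackSlice {B : Set X} (hB : IsCompact B)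
    (hGsub : G ⊆ (Set.univ : Set ℝ) ×ˢ B) (hGclosed : IsClosed G)
    (hslice : ∀ t, (slice G t).Nonempty) (t : ℝ) : (pullbackSlice ρ G t).Nonempty := by
  have hK r := isCompact_image_slice hρ hB hGsub hGclosed r (t - r)
  have : Nonempty (Ici (0:ℝ)) := nonempty_Ici.to_subtype
  rw [pullbackSlice, biInter_eq_iInter]
  refine IsCompact.nonempty_iInter_of_directed_nonempty_isCompact_isClosed _ ?_
    (fun r => (hslice _).image _) (fun r => hK r) (fun r => (hK r).isClosed)
  exact Antitone.directed_ge fun r r' hr => image_slice_subset_of_le hρ hskew hGpos t hr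

end SkewProduct

theorem stmt13_general {X : Type*} [MetricSpace X]
    (B : Set X) (hBcpt : IsCompact B)
    (ρ : ℝ → ℝ × X → ℝ × X) (hflow : IsFlow ρ) (hskew : IsSkewFlow ρ)
    (G : Set (ℝ × X)) (hGsub : G ⊆ (Set.univ : Set ℝ) ×ˢ B) (hGclosed : IsClosed G)
    (hGpos : Aplus ρ G = G)
    (hslice : ∀ t : ℝ, (G ∩ ({t} : Set ℝ) ×ˢ (Set.univ : Set X)).Nonempty) :
    (∀ t : ℝ,
      (⋂ r ∈ Set.Ici (0:ℝ), ρ r '' (G ∩ ({t - r} : Set ℝ) ×ˢ (Set.univ : Set X))).Nonempty ∧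
      IsCompact (⋂ r ∈ Set.Ici (0:ℝ), ρ r '' (G ∩ ({t - r} : Set ℝ) ×ˢ (Set.univ : Set X)))) ∧
    (⋃ t : ℝ, ⋂ r ∈ Set.Ici (0:ℝ), ρ r '' (G ∩ ({t - r} : Set ℝ) ×ˢ (Set.univ : Set X))) =
      Ainv ρ (⋃ t : ℝ, ⋂ r ∈ Set.Ici (0:ℝ),
        ρ r '' (G ∩ ({t - r} : Set ℝ) ×ˢ (Set.univ : Set X))) ∧
    (⋃ t : ℝ, ⋂ r ∈ Set.Ici (0:ℝ), ρ r '' (G ∩ ({t - r} : Set ℝ) ×ˢ (Set.univ : Set X))) =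
      Ainv ρ G ∧
    (∀ S ⊆ G, S = Ainv ρ S → S ⊆ Ainv ρ G) ∧
    ∀ t : ℝ, (Ainv ρ G ∩ ({t} : Set ℝ) ×ˢ (Set.univ : Set X)).Nonempty ∧
      IsCompact (Ainv ρ G ∩ ({t} : Set ℝ) ×ˢ (Set.univ : Set X)) := by
  have hA t : (pullbackSlice ρ G t).Nonempty ∧ IsCompact (pullbackSlice ρ G t) :=
    ⟨nonempty_pullbackSlice hflow hskew hGpos hBcpt hGsub hGclosed hslice t,
      isCompact_pullbackSlice hflow hBcpt hGsub hGclosed t⟩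
  have hunion : ⋃ t, pullbackSlice ρ G t = Ainv ρ G := iUnion_pullbackSlice hflow hskew hGpos
  refine ⟨hA, ?_, hunion, fun S hSG hS => hS.subset.trans (Ainv_mono hSG), fun t => ?_⟩
  · change ⋃ t, pullbackSlice ρ G t = Ainv ρ (⋃ t, pullbackSlice ρ G t)
    rw [hunion, hflow.Ainv_Ainv]
  · change (slice (Ainv ρ G) t).Nonempty ∧ IsCompact (slice (Ainv ρ G) t)
    rw [slice_Ainv_eq_pullbackSlice hflow hskew hGpos]
    exact hA t

/-- If `G ⊆ ℝ × B` (`B` compact) is closed, positively `π_n`-invariant, with all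
`t`-slices nonempty, then each `A(t) = ⋂_{r ≥ 0} G(t−r)π_n r` is nonempty and compact,
`A = ⋃_t A(t)` is invariant and equals `A_{π_n}(G)`, the maximal invariant subset of `G`;
in particular all `t`-slices of `A_{π_n}(G)` are nonempty and compact. -/
theorem stmt13 {X : Type*} [MetricSpace X] [LocallyCompactSpace X]
    (B : Set X) (hBcpt : IsCompact B)
    (ρ : ℝ → ℝ × X → ℝ × X) (hflow : IsFlow ρ) (hskew : IsSkewFlow ρ)
    (G : Set (ℝ × X)) (hGsub : G ⊆ (Set.univ : Set ℝ) ×ˢ B) (hGclosed : IsClosed G)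
    (hGpos : Aplus ρ G = G)
    (hslice : ∀ t : ℝ, (G ∩ ({t} : Set ℝ) ×ˢ (Set.univ : Set X)).Nonempty) :
    (∀ t : ℝ,
      (⋂ r ∈ Set.Ici (0:ℝ), ρ r '' (G ∩ ({t - r} : Set ℝ) ×ˢ (Set.univ : Set X))).Nonempty ∧
      IsCompact (⋂ r ∈ Set.Ici (0:ℝ), ρ r '' (G ∩ ({t - r} : Set ℝ) ×ˢ (Set.univ : Set X)))) ∧
    (⋃ t : ℝ, ⋂ r ∈ Set.Ici (0:ℝ), ρ r '' (G ∩ ({t - r} : Set ℝ) ×ˢ (Set.univ : Set X))) =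
      Ainv ρ (⋃ t : ℝ, ⋂ r ∈ Set.Ici (0:ℝ),
        ρ r '' (G ∩ ({t - r} : Set ℝ) ×ˢ (Set.univ : Set X))) ∧
    (⋃ t : ℝ, ⋂ r ∈ Set.Ici (0:ℝ), ρ r '' (G ∩ ({t - r} : Set ℝ) ×ˢ (Set.univ : Set X))) =
      Ainv ρ G ∧
    (∀ S ⊆ G, S = Ainv ρ S → S ⊆ Ainv ρ G) ∧
    ∀ t : ℝ, (Ainv ρ G ∩ ({t} : Set ℝ) ×ˢ (Set.univ : Set X)).Nonempty ∧
      IsCompact (Ainv ρ G ∩ ({t} : Set ℝ) ×ˢ (Set.univ : Set X)) :=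
  stmt13_general B hBcpt ρ hflow hskew G hGsub hGclosed hGpos hslice
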